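/- arXiv:1710.10908 — 2 statements merged into one kernel-verified Lean document; each statement's English description precedes it below -/
import Mathlib

section
/- For every prime p, every S-ring over a cyclic group of order p is cyclotomic. -/
open scoped Pointwise

/-- The element `\underline{X} = Σ_{x∈X} x` of the integral group ring `ℤG`. -/
noncomputable def grpSum {G : Type*} [Group G] [Fintype G] (X : Set G) :
    MonoidAlgebra ℤ G :=
  ∑ x : G, X.indicator (fun g => MonoidAlgebra.single g (1 : ℤ)) x

/-- A Schur ring (S-ring) over a finite group `G`, described by its partition
into basic sets: (S1) `{1}` is a basic set, (S2) the class of basic sets is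
closed under inverses, (S3) the ℤ-span of the sums `\underline{X}` is closed
under multiplication (i.e. is a subring of `ℤG`). -/
structure SchurRing (G : Type*) [Group G] [Fintype G] where
  basicSets : Set (Set G)
  nonempty_mem : ∀ X ∈ basicSets, X.Nonempty
  cover : ∀ g : G, ∃ X ∈ basicSets, g ∈ X
  disjoint' : ∀ X ∈ basicSets, ∀ Y ∈ basicSets, X ≠ Y → X ∩ Y = ∅
  one_mem : {(1 : G)} ∈ basicSets
  inv_mem : ∀ X ∈ basicSets, X⁻¹ ∈ basicSets
  mul_mem : ∀ X ∈ basicSets, ∀ Y ∈ basicSets,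
    grpSum X * grpSum Y ∈ Submodule.span ℤ (grpSum '' basicSets)

namespace SchurRing

variable {G : Type*} [Group G] [Fintype G]

/-- An `𝒜`-set: a union of basic sets. -/
def IsASet (A : SchurRing G) (S : Set G) : Prop :=
  ∃ T ⊆ A.basicSets, S = ⋃₀ T

/-- An `𝒜`-subgroup: a subgroup that is an `𝒜`-set. -/
def IsASubgroup (A : SchurRing G) (H : Subgroup G) : Prop :=
  A.IsASet (H : Set G)

/-- `𝒜` is schurian: its basic sets are the orbits of the stabilizer of `1`
in some group `K` with `G_right ≤ K ≤ Sym(G)`. -/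
def IsSchurian (A : SchurRing G) : Prop :=
  ∃ K : Subgroup (Equiv.Perm G), (∀ g : G, Equiv.mulRight g ∈ K) ∧
    A.basicSets = Set.range fun x : G =>
      MulAction.orbit (MulAction.stabilizer K (1 : G)) x

/-- `𝒜` is cyclotomic: its basic sets are the orbits of a subgroup of `Aut(G)`. -/
def IsCyclotomic (A : SchurRing G) : Prop :=
  ∃ M : Subgroup (MulAut G),
    A.basicSets = Set.range fun x : G => MulAction.orbit M x

/-- `𝒜` is trivial: its basic sets are `{1}` and `G ∖ {1}`. -/
def IsTrivial (A : SchurRing G) : Prop :=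
  A.basicSets ⊆ {{(1 : G)}, {(1 : G)}ᶜ}

/-- `𝒜 = 𝒜_H ⊗ 𝒜_K`: an internal tensor product decomposition of `𝒜`
with respect to the internal direct product `G = H × K`. -/
def IsTensorDecomp (A : SchurRing G) (H K : Subgroup G) : Prop :=
  A.IsASubgroup H ∧ A.IsASubgroup K ∧ H ⊓ K = ⊥ ∧ H ⊔ K = ⊤ ∧
  ∀ X ∈ A.basicSets, ∃ X₁ ∈ A.basicSets, ∃ X₂ ∈ A.basicSets,
    X₁ ⊆ (H : Set G) ∧ X₂ ⊆ (K : Set G) ∧ X = X₁ * X₂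

/-- `𝒜` is the `U/L`-wreath product: `U`, `L` are `𝒜`-subgroups, `L ⊴ G`,
`L ≤ U`, and `L ≤ rad(X)` for every basic set `X` outside `U`. -/
def IsWreathSection (A : SchurRing G) (U L : Subgroup G) : Prop :=
  A.IsASubgroup U ∧ A.IsASubgroup L ∧ L ≤ U ∧ L.Normal ∧
  ∀ X ∈ A.basicSets, ¬ X ⊆ (U : Set G) →
    ∀ g ∈ L, (g * ·) '' X = X ∧ (· * g) '' X = X

end SchurRing

/-- A finite group is a Schur group if every S-ring over it is schurian. -/
def IsSchurGroup (G : Type*) [Group G] [Fintype G] : Prop :=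
  ∀ A : SchurRing G, A.IsSchurian

/-- A Cayley isomorphism between S-rings: a group isomorphism mapping the
basic sets of `𝒜` onto the basic sets of `𝒜'`. -/
def IsCayleyIso {G G' : Type*} [Group G] [Fintype G] [Group G'] [Fintype G']
    (A : SchurRing G) (A' : SchurRing G') (f : G ≃* G') : Prop :=
  (fun X : Set G => ⇑f '' X) '' A.basicSets = A'.basicSets

/-!
Send `ℤG`, `G = C_p`, to `K = ℚ(ζ)` by the character `x ↦ ζ ^ x`. The `ℚ`-span of the images of
the basic sets is closed under multiplication, hence a subfield `F`, and its dimension is at most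
the number `r` of nontrivial basic sets. An element of `Gal(K/F)` acts by `ζ ↦ ζ ^ u` and fixes
the image of every basic set; as the only `ℚ`-linear relation among `1, ζ, …, ζ ^ (p - 1)` is
their sum, the automorphism `x ↦ x ^ u` of `G` then fixes every basic set. With `M ≤ Aut(G)` the
stabilizer of all basic sets this gives `p - 1 = [F : ℚ] |Gal(K/F)| ≤ r |M|`. On the other hand
`M` acts freely on `G ∖ {1}`, so each of the `r` nontrivial basic sets, which partition `G ∖ {1}`,
contains an `M`-orbit of size `|M|`. Hence every nontrivial basic set is a single `M`-orbit.
-/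

open Finset

namespace SchurRing

variable {G : Type*} [Group G] [Fintype G] (A : SchurRing G)

theorem eq_of_mem_of_mem {X Y : Set G} (hX : X ∈ A.basicSets) (hY : Y ∈ A.basicSets) {x : G}
    (hxX : x ∈ X) (hxY : x ∈ Y) : X = Y := by
  by_contra hne
  exact (A.disjoint' X hX Y hY hne).subset ⟨hxX, hxY⟩

theorem one_notMem {X : Set G} (hX : X ∈ A.basicSets) (hne : X ≠ {1}) : (1 : G) ∉ X :=
  fun h => hne (A.eq_of_mem_of_mem hX A.one_mem h rfl)

noncomputable def nontrivialBasicSets : Finset (Set G) :=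
  A.basicSets.toFinite.toFinset.erase {1}

theorem mem_nontrivialBasicSets {X : Set G} :
    X ∈ A.nontrivialBasicSets ↔ X ∈ A.basicSets ∧ X ≠ {1} := by
  rw [nontrivialBasicSets, Finset.mem_erase, Set.Finite.mem_toFinset, and_comm]

theorem sum_nontrivialBasicSets_indicator {M : Type*} [AddCommMonoid M] (f : G → M) :
    f 1 + ∑ X ∈ A.nontrivialBasicSets, ∑ x, X.indicator f x = ∑ x, f x := by
  have hpartition : ∀ x, ∑ X ∈ A.basicSets.toFinite.toFinset, X.indicator f x = f x := by
    intro x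
    obtain ⟨X, hX, hx⟩ := A.cover x
    rw [Finset.sum_eq_single_of_mem X (by simpa using hX), Set.indicator_of_mem hx]
    intro Y hY hYX
    exact Set.indicator_of_notMem
      (fun hy => hYX (A.eq_of_mem_of_mem (by simpa using hY) hX hy hx)) _
  have hone : ∑ x, ({1} : Set G).indicator f x = f 1 := by
    rw [Fintype.sum_eq_single (1 : G) fun x (hx : x ≠ 1) =>
      Set.indicator_of_notMem (s := {1}) hx f]
    exact Set.indicator_of_mem rfl f
  have hsplit := Finset.add_sum_erase A.basicSets.toFinite.toFinset
    (fun X => ∑ x, X.indicator f x) (by simpa using A.one_mem)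
  rw [← hone, nontrivialBasicSets, hsplit, Finset.sum_comm,
    Finset.sum_congr rfl fun x _ => hpartition x]

theorem sum_ncard_nontrivialBasicSets :
    ∑ X ∈ A.nontrivialBasicSets, X.ncard = Fintype.card G - 1 := by
  have h := A.sum_nontrivialBasicSets_indicator (fun _ => 1)
  have hcard : ∀ X : Set G, ∑ x, X.indicator (fun _ => 1) x = X.ncard := by
    classical
    intro X
    simp [Set.indicator_apply, Finset.sum_boole, Set.ncard_eq_toFinset_card']
  simp only [hcard, Finset.sum_const, Finset.card_univ, smul_eq_mul, mul_one] at h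
  omega

def autStabilizer : Subgroup (MulAut G) :=
  ⨅ X ∈ A.basicSets, MulAction.stabilizer (MulAut G) X

theorem mem_autStabilizer {φ : MulAut G} :
    φ ∈ A.autStabilizer ↔ ∀ X ∈ A.basicSets, φ • X = X := by
  simp [autStabilizer, Subgroup.mem_iInf, MulAction.mem_stabilizer_iff]

theorem orbit_autStabilizer_subset {X : Set G} (hX : X ∈ A.basicSets) {x : G} (hx : x ∈ X) :
    MulAction.orbit A.autStabilizer x ⊆ X := by
  rintro _ ⟨φ, rfl⟩
  rw [← (A.mem_autStabilizer.1 φ.2) X hX]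
  exact Set.smul_mem_smul_set hx

end SchurRing

section CharSum

variable {G : Type*} [Group G] [Fintype G] {K : Type*} [CommRing K] (χ : G →* K)

noncomputable def charSum (X : Set G) : K :=
  ∑ x, X.indicator χ x

theorem lift_grpSum (X : Set G) : MonoidAlgebra.lift ℤ K G χ (grpSum X) = charSum χ X := by
  simp only [grpSum, charSum, map_sum]
  refine Finset.sum_congr rfl fun x _ => ?_
  by_cases hx : x ∈ X <;> simp [hx, MonoidAlgebra.lift_single]

theorem charSum_singleton_one : charSum χ {1} = 1 := by
  rw [charSum, Fintype.sum_eq_single (1 : G) fun x (hx : x ≠ 1) =>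
    Set.indicator_of_notMem (s := {1}) hx χ, Set.indicator_of_mem (Set.mem_singleton 1), map_one]

theorem map_charSum {F : Type*} [FunLike F K K] [AddMonoidHomClass F K K] (g : F)
    (φ : MulAut G) (h : ∀ x, g (χ x) = χ (φ x)) (X : Set G) :
    g (charSum χ X) = charSum χ (φ • X) := by
  rw [charSum, charSum, map_sum, ← Equiv.sum_comp φ.toEquiv (fun y => (φ • X).indicator χ y)]
  refine Finset.sum_congr rfl fun x _ => ?_
  change g (X.indicator χ x) = (φ • X).indicator χ (φ x)
  have hmem : φ x ∈ φ • X ↔ x ∈ X := Set.smul_mem_smul_set_iff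
  by_cases hx : x ∈ X
  · rw [Set.indicator_of_mem hx, h, Set.indicator_of_mem (hmem.2 hx)]
  · rw [Set.indicator_of_notMem hx, map_zero, Set.indicator_of_notMem (mt hmem.1 hx)]

end CharSum

namespace SchurRing

variable {G : Type*} [Group G] [Fintype G] (A : SchurRing G)
variable {K : Type*} [CommRing K] [Algebra ℚ K] (χ : G →* K)

noncomputable def charSpan : Submodule ℚ K :=
  Submodule.span ℚ (charSum χ '' A.basicSets)

theorem charSum_mem_charSpan {X : Set G} (hX : X ∈ A.basicSets) :
    charSum χ X ∈ A.charSpan χ :=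
  Submodule.subset_span ⟨X, hX, rfl⟩

theorem charSpan_mul_le : A.charSpan χ * A.charSpan χ ≤ A.charSpan χ := by
  rw [charSpan, Submodule.span_mul_span]
  refine Submodule.span_le.2 ?_
  rintro _ ⟨_, ⟨X, hX, rfl⟩, _, ⟨Y, hY, rfl⟩, rfl⟩
  have h := Submodule.mem_map_of_mem (f := (MonoidAlgebra.lift ℤ K G χ).toLinearMap)
    (A.mul_mem X hX Y hY)
  have hcomp : (MonoidAlgebra.lift ℤ K G χ).toLinearMap ∘ grpSum = charSum χ :=
    funext (lift_grpSum χ)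
  rw [Submodule.map_span, ← Set.image_comp, hcomp, AlgHom.toLinearMap_apply, map_mul,
    lift_grpSum, lift_grpSum] at h
  exact Submodule.span_le_restrictScalars ℤ ℚ _ h

noncomputable def charSubalgebra : Subalgebra ℚ K :=
  (A.charSpan χ).toSubalgebra (charSum_singleton_one χ ▸ A.charSum_mem_charSpan χ A.one_mem)
    fun _ _ hx hy => A.charSpan_mul_le χ (Submodule.mul_mem_mul hx hy)

theorem finrank_charSpan_le (hχ : ∑ x, χ x = 0) :
    Module.finrank ℚ (A.charSpan χ) ≤ #A.nontrivialBasicSets := by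
  classical
  set s := A.nontrivialBasicSets.image (charSum χ)
  have hle : A.charSpan χ ≤ Submodule.span ℚ s := by
    refine Submodule.span_le.2 ?_
    rintro _ ⟨X, hX, rfl⟩
    by_cases hone : X = {1}
    · -- `charSum χ {1} = 1` is minus the sum over the nontrivial basic sets, as all of them
      -- add up to `∑ x, χ x = 0`
      have hsum := A.sum_nontrivialBasicSets_indicator χ
      rw [map_one, hχ, ← eq_neg_iff_add_eq_zero] at hsum
      rw [hone, charSum_singleton_one, SetLike.mem_coe, hsum]
      exact neg_mem (sum_mem fun Y hY => Submodule.subset_span (Finset.mem_image_of_mem _ hY))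
    · exact Submodule.subset_span
        (Finset.mem_image_of_mem _ (A.mem_nontrivialBasicSets.2 ⟨hX, hone⟩))
  calc Module.finrank ℚ (A.charSpan χ) ≤ Module.finrank ℚ (Submodule.span ℚ (s : Set K)) :=
        Submodule.finrank_mono hle
    _ ≤ #s := finrank_span_finset_le_card s
    _ ≤ #A.nontrivialBasicSets := card_image_le

end SchurRing

theorem ZMod.sum_eq_sum_range {M : Type*} [AddCommMonoid M] (n : ℕ) [NeZero n]
    (f : ZMod n → M) : ∑ a, f a = ∑ i ∈ range n, f i :=
  Finset.sum_nbij' ZMod.val Nat.cast (fun a _ => mem_range.2 (ZMod.val_lt a))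
    (fun _ _ => mem_univ _) (fun a _ => ZMod.natCast_zmod_val a)
    (fun _ hi => ZMod.val_cast_of_lt (mem_range.1 hi)) (fun a _ => by rw [ZMod.natCast_zmod_val])

noncomputable def Units.mulLeftMulAut (R : Type*) [Ring R] : Rˣ →* MulAut (Multiplicative R) :=
  (MulAutMultiplicative R).symm.toMonoidHom.comp AddAut.mulLeft

theorem Units.mulLeftMulAut_apply {R : Type*} [Ring R] (u : Rˣ) (x : Multiplicative R) :
    Units.mulLeftMulAut R u x = Multiplicative.ofAdd (u * x.toAdd) :=
  rfl

theorem Units.mulLeftMulAut_injective (R : Type*) [Ring R] :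
    Function.Injective (Units.mulLeftMulAut R) := fun u v h =>
  Units.ext (by simpa [Units.mulLeftMulAut_apply] using
    DFunLike.congr_fun h (Multiplicative.ofAdd 1))

namespace IsPrimitiveRoot

variable {p : ℕ} [Fact p.Prime] {K : Type*} [Field K] {ζ : K} (hζ : IsPrimitiveRoot ζ p)
include hζ

noncomputable def zmodChar : Multiplicative (ZMod p) →* K :=
  (AddChar.zmodChar p hζ.pow_eq_one).toMonoidHom

theorem zmodChar_ofAdd_natCast (i : ℕ) : hζ.zmodChar (Multiplicative.ofAdd (i : ZMod p)) = ζ ^ i :=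
  AddChar.zmodChar_apply' hζ.pow_eq_one i

theorem sum_zmodChar : ∑ x, hζ.zmodChar x = 0 := by
  rw [← (Equiv.sum_comp Multiplicative.ofAdd), ZMod.sum_eq_sum_range]
  simp only [zmodChar_ofAdd_natCast]
  exact hζ.geom_sum_eq_zero (Fact.out : p.Prime).one_lt

theorem algEquiv_zmodChar [CharZero K] (σ : K ≃ₐ[ℚ] K) (x : Multiplicative (ZMod p)) :
    σ (hζ.zmodChar x) = hζ.zmodChar (Units.mulLeftMulAut _ (hζ.autToPow ℚ σ) x) := by
  simp only [zmodChar, AddChar.toMonoidHom_apply, AddChar.zmodChar_apply,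
    Units.mulLeftMulAut_apply, toAdd_ofAdd, map_pow, ← hζ.autToPow_spec ℚ σ, ← pow_mul,
    ZMod.val_mul, ← pow_eq_pow_mod _ hζ.pow_eq_one]

theorem eq_of_sum_range_smul_pow_eq_zero [CharZero K] {c : ℕ → ℚ}
    (h : ∑ i ∈ range p, c i • ζ ^ i = 0) {i : ℕ} (hi : i < p) : c i = c (p - 1) := by
  have hp : p.Prime := Fact.out
  have hdeg : (minpoly ℚ ζ).natDegree = p - 1 := by
    rw [← Polynomial.cyclotomic_eq_minpoly_rat hζ hp.pos, Polynomial.natDegree_cyclotomic,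
      Nat.totient_prime hp]
  have hshift : ∑ j ∈ range (p - 1), (c j - c (p - 1)) • ζ ^ j = 0 := by
    have hfull : ∑ j ∈ range p, (c j - c (p - 1)) • ζ ^ j = 0 := by
      simp only [sub_smul, sum_sub_distrib, ← smul_sum, h, hζ.geom_sum_eq_zero hp.one_lt,
        smul_zero, sub_zero]
    rwa [← Nat.sub_add_cancel hp.one_le, sum_range_succ, Nat.sub_add_cancel hp.one_le, sub_self,
      zero_smul, add_zero] at hfull
  rcases Nat.lt_or_ge i (p - 1) with hi' | hi'
  · have hindep := Fintype.linearIndependent_iff.1 (linearIndependent_pow ζ)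
      (fun j => c j - c (p - 1))
      (by rwa [Fin.sum_univ_eq_sum_range (fun j => (c j - c (p - 1)) • ζ ^ j), hdeg])
    exact sub_eq_zero.1 (hindep ⟨i, hdeg ▸ hi'⟩)
  · rw [show i = p - 1 by omega]

theorem charSum_zmodChar [CharZero K] (X : Set (Multiplicative (ZMod p))) :
    charSum hζ.zmodChar X =
      ∑ i ∈ range p, (X.indicator 1 (Multiplicative.ofAdd (i : ZMod p)) : ℚ) • ζ ^ i := by
  rw [charSum, ← (Equiv.sum_comp Multiplicative.ofAdd), ZMod.sum_eq_sum_range]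
  refine Finset.sum_congr rfl fun i _ => ?_
  by_cases hi : Multiplicative.ofAdd (i : ZMod p) ∈ X
  · rw [Set.indicator_of_mem hi, Set.indicator_of_mem hi, Pi.one_apply, one_smul,
      zmodChar_ofAdd_natCast]
  · rw [Set.indicator_of_notMem hi, Set.indicator_of_notMem hi, zero_smul]

theorem injOn_charSum_zmodChar [CharZero K] :
    Set.InjOn (charSum hζ.zmodChar) {X | (1 : Multiplicative (ZMod p)) ∉ X} := by
  intro X hX Y hY h
  set c : ℕ → ℚ := fun i => X.indicator 1 (Multiplicative.ofAdd (i : ZMod p)) -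
    Y.indicator 1 (Multiplicative.ofAdd (i : ZMod p))
  have hrel : ∑ i ∈ range p, c i • ζ ^ i = 0 := by
    simp only [c, sub_smul, sum_sub_distrib]
    rw [← hζ.charSum_zmodChar, ← hζ.charSum_zmodChar, h, sub_self]
  have hc0 : c 0 = 0 := by
    simp [c, Set.indicator_of_notMem hX, Set.indicator_of_notMem hY]
  refine Set.indicator_one_inj ℚ (funext fun x => ?_)
  have hx : c x.toAdd.val = 0 := by
    rw [hζ.eq_of_sum_range_smul_pow_eq_zero hrel (ZMod.val_lt _), ← hc0,
      hζ.eq_of_sum_range_smul_pow_eq_zero hrel (Fact.out : p.Prime).pos]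
  simpa [c, sub_eq_zero] using hx

end IsPrimitiveRoot

theorem MulAut.card_le_ncard_orbit {G : Type*} [Group G] [Finite G] (M : Subgroup (MulAut G))
    {x : G} (hx : Subgroup.zpowers x = ⊤) : Nat.card M ≤ (MulAction.orbit M x).ncard := by
  rw [← Nat.card_coe_set_eq]
  refine Nat.card_le_card_of_injective (fun φ => ⟨φ • x, MulAction.mem_orbit x φ⟩) fun φ ψ h => ?_
  have hclosure : Subgroup.closure {x} = ⊤ := by rw [← Subgroup.zpowers_eq_closure, hx]
  refine Subtype.ext (MulEquiv.toMonoidHom_injective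
    (MonoidHom.eq_of_eqOn_dense hclosure ?_))
  rintro _ rfl
  exact congrArg Subtype.val h

namespace SchurRing

variable {p : ℕ} [Fact p.Prime] (A : SchurRing (Multiplicative (ZMod p)))

theorem mulLeftMulAut_autToPow_mem_autStabilizer {K : Type*} [Field K] [CharZero K] {ζ : K}
    (hζ : IsPrimitiveRoot ζ p) {σ : K ≃ₐ[ℚ] K}
    (hσ : ∀ X ∈ A.basicSets, σ (charSum hζ.zmodChar X) = charSum hζ.zmodChar X) :
    Units.mulLeftMulAut _ (hζ.autToPow ℚ σ) ∈ A.autStabilizer := by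
  set φ := Units.mulLeftMulAut _ (hζ.autToPow ℚ σ)
  refine A.mem_autStabilizer.2 fun X hX => ?_
  by_cases hone : X = {1}
  · rw [hone, Set.smul_set_singleton, MulAut.smul_def, map_one]
  have h1X := A.one_notMem hX hone
  refine hζ.injOn_charSum_zmodChar (show 1 ∉ φ • X from ?_) h1X ?_
  · rwa [Set.mem_smul_set_iff_inv_smul_mem, MulAut.smul_def, map_one]
  · rw [← map_charSum _ σ φ (hζ.algEquiv_zmodChar σ), hσ X hX]

theorem sub_one_le_card_mul_card_autStabilizer :
    p - 1 ≤ #A.nontrivialBasicSets * Nat.card A.autStabilizer := by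
  have hp : p.Prime := Fact.out
  have : NeZero (p : ℚ) := ⟨Nat.cast_ne_zero.2 hp.ne_zero⟩
  let K := CyclotomicField p ℚ
  have : IsCyclotomicExtension {p} ℚ K := CyclotomicField.isCyclotomicExtension p ℚ
  have : FiniteDimensional ℚ K := IsCyclotomicExtension.finiteDimensional {p} ℚ K
  have : IsGalois ℚ K := IsCyclotomicExtension.isGalois {p} ℚ K
  have hζ : IsPrimitiveRoot (IsCyclotomicExtension.zeta p ℚ K) p :=
    IsCyclotomicExtension.zeta_spec p ℚ K
  let F := (A.charSubalgebra hζ.zmodChar).toIntermediateField'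
    (Subalgebra.isField_of_algebraic _)
  have hfinrank : Module.finrank ℚ F = Module.finrank ℚ (A.charSpan hζ.zmodChar) := by
    rw [← IntermediateField.finrank_eq_finrank_subalgebra,
      toSubalgebra_toIntermediateField', ← Subalgebra.finrank_toSubmodule]
    rfl
  have hgalois : Module.finrank ℚ F * Nat.card F.fixingSubgroup = p - 1 := by
    rw [IsGalois.card_fixingSubgroup_eq_finrank, Module.finrank_mul_finrank,
      IsCyclotomicExtension.finrank K (Polynomial.cyclotomic.irreducible_rat hp.pos),
      Nat.totient_prime hp]
  have hfix : ∀ σ ∈ F.fixingSubgroup,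
      Units.mulLeftMulAut _ (hζ.autToPow ℚ σ) ∈ A.autStabilizer := fun σ hσ =>
    A.mulLeftMulAut_autToPow_mem_autStabilizer hζ fun X hX =>
      (IntermediateField.mem_fixingSubgroup_iff F σ).1 hσ _ (A.charSum_mem_charSpan _ hX)
  have hinj : Function.Injective fun σ : F.fixingSubgroup =>
      (⟨_, hfix σ σ.2⟩ : A.autStabilizer) := fun σ τ h =>
    Subtype.ext (hζ.autToPow_injective ℚ
      (Units.mulLeftMulAut_injective _ (congrArg Subtype.val h)))
  rw [← hgalois, hfinrank]
  exact Nat.mul_le_mul (A.finrank_charSpan_le _ hζ.sum_zmodChar)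
    (Nat.card_le_card_of_injective _ hinj)

theorem card_autStabilizer_le_ncard_orbit {x : Multiplicative (ZMod p)} (hx : x ≠ 1) :
    Nat.card A.autStabilizer ≤ (MulAction.orbit A.autStabilizer x).ncard :=
  MulAut.card_le_ncard_orbit _ (zpowers_eq_top_of_prime_card
    (by rw [Nat.card_eq_fintype_card, Fintype.card_multiplicative, ZMod.card]) hx)

theorem card_autStabilizer_le_ncard {X : Set (Multiplicative (ZMod p))}
    (hX : X ∈ A.nontrivialBasicSets) : Nat.card A.autStabilizer ≤ X.ncard := by
  obtain ⟨hX, hne⟩ := A.mem_nontrivialBasicSets.1 hX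
  obtain ⟨x, hx⟩ := A.nonempty_mem X hX
  exact (A.card_autStabilizer_le_ncard_orbit fun h => A.one_notMem hX hne (h ▸ hx)).trans
    (Set.ncard_le_ncard (A.orbit_autStabilizer_subset hX hx))

theorem ncard_eq_card_autStabilizer {X : Set (Multiplicative (ZMod p))}
    (hX : X ∈ A.nontrivialBasicSets) : X.ncard = Nat.card A.autStabilizer := by
  have hsum : ∑ Y ∈ A.nontrivialBasicSets, Nat.card A.autStabilizer =
      ∑ Y ∈ A.nontrivialBasicSets, Y.ncard := by
    refine le_antisymm (sum_le_sum fun Y hY => A.card_autStabilizer_le_ncard hY) ?_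
    rw [A.sum_ncard_nontrivialBasicSets, Fintype.card_multiplicative, ZMod.card, sum_const,
      smul_eq_mul]
    exact A.sub_one_le_card_mul_card_autStabilizer
  exact ((sum_eq_sum_iff_of_le fun Y hY => A.card_autStabilizer_le_ncard hY).1 hsum X hX).symm

theorem orbit_autStabilizer_eq {X : Set (Multiplicative (ZMod p))} (hX : X ∈ A.basicSets)
    {x : Multiplicative (ZMod p)} (hx : x ∈ X) : MulAction.orbit A.autStabilizer x = X := by
  by_cases hone : X = {1}
  · subst hone
    refine (A.orbit_autStabilizer_subset hX hx).antisymm (Set.singleton_subset_iff.2 ?_)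
    exact Set.mem_singleton_iff.1 hx ▸ MulAction.mem_orbit_self x
  refine Set.eq_of_subset_of_ncard_le (A.orbit_autStabilizer_subset hX hx) ?_
  rw [A.ncard_eq_card_autStabilizer (A.mem_nontrivialBasicSets.2 ⟨hX, hone⟩)]
  exact A.card_autStabilizer_le_ncard_orbit fun h => A.one_notMem hX hone (h ▸ hx)

end SchurRing

theorem sring_over_Cp_cyclotomic (p : ℕ) [Fact p.Prime]
    (A : SchurRing (Multiplicative (ZMod p))) : A.IsCyclotomic := by
  refine ⟨A.autStabilizer, Set.ext fun X => ⟨fun hX => ?_, ?_⟩⟩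
  · obtain ⟨x, hx⟩ := A.nonempty_mem X hX
    exact ⟨x, A.orbit_autStabilizer_eq hX hx⟩
  · rintro ⟨x, rfl⟩
    obtain ⟨X, hX, hx⟩ := A.cover x
    change MulAction.orbit _ x ∈ _
    rwa [A.orbit_autStabilizer_eq hX hx]
end

section
/- Let A and P be finite groups, U_0 ⫳ U ≤ Aut(A) a normal subgroup, V_0 ⫳ V ≤ Aut(P) a normal subgroup, X_A an orbit of U on A and X_P an orbit of V on P. Let Π_A be the set of orbits of U_0 contained in X_A and Π_P the set of orbits of V_0 contained in X_P, and let U^{Π_A} and V^{Π_P} be the permutation groups induced by U on Π_A and by V on Π_P. Suppose f : Π_A → Π_P is a bijection whose induced map on permutations carries U^{Π_A} onto V^{Π_P}, and let K be the subdirect product of U and V with respect to the natural epimorphisms φ : U → U^{Π_A}, ψ : V → V^{Π_P} and this isomorphism. Then K ≤ Aut(A) × Aut(P) ≤ Aut(A × P), and the set ⋃_{Y ∈ Π_A} Y × Y^f is an orbit of K on G = A × P. -/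
/-!
Since `U₀` is normalised by `U`, the `U₀`-orbits inside the `U`-orbit `X_A` are permuted
transitively by `U`, and the compatibility condition defining `K` makes `K` a subgroup. A point
`(a, p) ∈ Y × Y^f` can be moved to any `(b, q) ∈ Y' × Y'^f`: pick `u ∈ U` with
`u a = b`, so `u Y = Y'`; lift it to `(u, v) ∈ K`, so `v p ∈ Y'^f`; and finish with `(1, v₀)`
for a suitable `v₀ ∈ V₀`, which lies in `K` because `V₀` fixes every `V₀`-orbit.
-/

open MulAction Set
open scoped Pointwise

section Orbits

variable {G α : Type*} [Group G] [MulAction G α]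

theorem Subgroup.smul_orbit_of_mem_normalizer {N : Subgroup G} {g : G}
    (hg : g ∈ Subgroup.normalizer (N : Set G)) (a : α) :
    g • orbit N a = orbit N (g • a) := by
  ext x
  simp only [mem_smul_set, mem_orbit_iff, Subtype.exists, Subgroup.mk_smul, exists_prop]
  constructor
  · rintro ⟨_, ⟨n, hn, rfl⟩, rfl⟩
    exact ⟨g * n * g⁻¹, (hg n).1 hn, by simp [smul_smul]⟩
  · rintro ⟨n, hn, rfl⟩
    have hn' : g⁻¹ * n * g ∈ N := (Subgroup.mem_normalizer_iff''.1 hg n).1 hn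
    refine ⟨(g⁻¹ * n * g) • a, ⟨_, hn', rfl⟩, ?_⟩
    simp [smul_smul, mul_assoc]

theorem Subgroup.exists_smul_eq_of_mem_orbit {N : Subgroup G} {a b c : α}
    (hb : b ∈ orbit N a) (hc : c ∈ orbit N a) : ∃ n ∈ N, n • b = c := by
  rw [← orbit_eq_iff.mpr hb] at hc
  obtain ⟨⟨n, hn⟩, rfl⟩ := hc
  exact ⟨n, hn, rfl⟩

def orbitsIn (N : Subgroup G) (X : Set α) : Set (Set α) :=
  {Y | ∃ a ∈ X, Y = orbit N a}

variable {U N : Subgroup G} {a₀ : α}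

theorem smul_mem_orbitsIn_orbit (hN : U ≤ Subgroup.normalizer (N : Set G)) {u : G}
    (hu : u ∈ U) {Y : Set α} (hY : Y ∈ orbitsIn N (orbit U a₀)) :
    u • Y ∈ orbitsIn N (orbit U a₀) := by
  obtain ⟨a, ha, rfl⟩ := hY
  refine ⟨u • a, ?_, Subgroup.smul_orbit_of_mem_normalizer (hN hu) a⟩
  rw [← orbit_eq_iff.mpr ha]
  exact mem_orbit a (⟨u, hu⟩ : U)

theorem exists_smul_eq_of_mem_orbitsIn_orbit (hNU : N ≤ U)
    (hN : U ≤ Subgroup.normalizer (N : Set G)) {Y Y' : Set α}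
    (hY : Y ∈ orbitsIn N (orbit U a₀)) (hY' : Y' ∈ orbitsIn N (orbit U a₀))
    {a b : α} (ha : a ∈ Y) (hb : b ∈ Y') : ∃ u ∈ U, u • a = b ∧ u • Y = Y' := by
  obtain ⟨c, hc, rfl⟩ := hY
  obtain ⟨c', hc', rfl⟩ := hY'
  have hsub : ∀ {c d : α}, c ∈ orbit U a₀ → d ∈ orbit N c → d ∈ orbit U a₀ := by
    rintro c d hc ⟨⟨n, hn⟩, rfl⟩
    rw [← orbit_eq_iff.mpr hc]
    exact mem_orbit c (⟨n, hNU hn⟩ : U)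
  obtain ⟨u, hu, rfl⟩ := Subgroup.exists_smul_eq_of_mem_orbit (hsub hc ha) (hsub hc' hb)
  refine ⟨u, hu, rfl, ?_⟩
  rw [← orbit_eq_iff.mpr ha, ← orbit_eq_iff.mpr hb,
    Subgroup.smul_orbit_of_mem_normalizer (hN hu)]

end Orbits

section SubdirectProduct

variable {G H α β : Type*} [Group G] [Group H] [MulAction G α] [MulAction H β]

/-- With `B = Π`, the condition `f (u • Y) = v • f Y` for all `Y ∈ B` is the paper's
`f (φ u) = ψ v`: `u` and `v` induce corresponding permutations of `Π` and of `f '' Π`. -/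
def subdirectProduct (U : Subgroup G) (V : Subgroup H) (B : Set (Set α))
    (hB : ∀ u ∈ U, ∀ Y ∈ B, u • Y ∈ B) (f : Set α → Set β) : Subgroup (G × H) where
  carrier := {w | w.1 ∈ U ∧ w.2 ∈ V ∧ ∀ Y ∈ B, f (w.1 • Y) = w.2 • f Y}
  one_mem' :=
    ⟨U.one_mem, V.one_mem, fun Y _ => by simp only [Prod.fst_one, Prod.snd_one, one_smul]⟩
  mul_mem' := by
    rintro ⟨u₁, v₁⟩ ⟨u₂, v₂⟩ ⟨hu₁, hv₁, hf₁⟩ ⟨hu₂, hv₂, hf₂⟩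
    refine ⟨U.mul_mem hu₁ hu₂, V.mul_mem hv₁ hv₂, fun Y hY => ?_⟩
    rw [Prod.fst_mul, Prod.snd_mul, mul_smul, mul_smul, hf₁ _ (hB u₂ hu₂ Y hY), hf₂ Y hY]
  inv_mem' := by
    rintro ⟨u, v⟩ ⟨hu, hv, hf⟩
    refine ⟨U.inv_mem hu, V.inv_mem hv, fun Y hY => ?_⟩
    rw [Prod.fst_inv, Prod.snd_inv, eq_inv_smul_iff, ← hf _ (hB _ (U.inv_mem hu) Y hY),
      smul_inv_smul]

variable {U : Subgroup G} {V : Subgroup H} {B : Set (Set α)}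
  {hB : ∀ u ∈ U, ∀ Y ∈ B, u • Y ∈ B} {f : Set α → Set β}

theorem mk_smul_mem_iUnion_prod_of_mem_subdirectProduct {w : G × H}
    (hw : w ∈ subdirectProduct U V B hB f) {x : α × β} (hx : x ∈ ⋃ Y ∈ B, Y ×ˢ f Y) :
    (w.1 • x.1, w.2 • x.2) ∈ ⋃ Y ∈ B, Y ×ˢ f Y := by
  obtain ⟨hu, -, hf⟩ := hw
  simp only [mem_iUnion₂, exists_prop, mem_prod] at hx ⊢
  obtain ⟨Y, hY, hx₁, hx₂⟩ := hx
  exact ⟨w.1 • Y, hB _ hu Y hY, smul_mem_smul_set hx₁, hf Y hY ▸ smul_mem_smul_set hx₂⟩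

theorem one_mk_mem_subdirectProduct {M : Subgroup H} (hMV : M ≤ V) {X : Set β}
    (hf : MapsTo f B (orbitsIn M X)) {m : H} (hm : m ∈ M) :
    ((1 : G), m) ∈ subdirectProduct U V B hB f := by
  refine ⟨U.one_mem, hMV hm, fun Y hY => ?_⟩
  obtain ⟨x, -, hx⟩ := hf hY
  rw [one_smul, hx]
  exact (smul_orbit (⟨m, hm⟩ : M) x).symm

theorem image_subdirectProduct_eq_iUnion_prod {N : Subgroup G} {M : Subgroup H} {a₀ : α}
    {X : Set β} (hNU : N ≤ U) (hN : U ≤ Subgroup.normalizer (N : Set G)) (hMV : M ≤ V)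
    (hf : MapsTo f (orbitsIn N (orbit U a₀)) (orbitsIn M X))
    (hcarry : ∀ u ∈ U, ∃ v ∈ V,
      ∀ Y ∈ orbitsIn N (orbit U a₀), f (u • Y) = v • f Y)
    {g : α × β} (hg : g ∈ ⋃ Y ∈ orbitsIn N (orbit U a₀), Y ×ˢ f Y) :
    (fun w : G × H => (w.1 • g.1, w.2 • g.2)) ''
        subdirectProduct U V (orbitsIn N (orbit U a₀))
          (fun _ hu _ => smul_mem_orbitsIn_orbit hN hu) f =
      ⋃ Y ∈ orbitsIn N (orbit U a₀), Y ×ˢ f Y := by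
  refine subset_antisymm ?_ fun x hx => ?_
  · rintro _ ⟨w, hw, rfl⟩
    exact mk_smul_mem_iUnion_prod_of_mem_subdirectProduct hw hg
  simp only [mem_iUnion₂, exists_prop, mem_prod] at hg hx
  obtain ⟨Y, hY, hg₁, hg₂⟩ := hg
  obtain ⟨Y', hY', hx₁, hx₂⟩ := hx
  obtain ⟨u, hu, hux, rfl⟩ := exists_smul_eq_of_mem_orbitsIn_orbit hNU hN hY hY' hg₁ hx₁
  obtain ⟨v, hv, hfv⟩ := hcarry u hu
  have huv : (u, v) ∈ subdirectProduct U V _ (fun _ hu _ => smul_mem_orbitsIn_orbit hN hu) f :=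
    ⟨hu, hv, hfv⟩
  obtain ⟨y, -, hy⟩ := hf hY'
  have hvg : v • g.2 ∈ orbit M y := hy ▸ hfv Y hY ▸ smul_mem_smul_set hg₂
  obtain ⟨m, hm, hmx⟩ := Subgroup.exists_smul_eq_of_mem_orbit hvg (hy ▸ hx₂)
  refine ⟨((1 : G), m) * (u, v), mul_mem (one_mk_mem_subdirectProduct hMV hf hm) huv, ?_⟩
  simp only [Prod.mk_mul_mk, one_mul, mul_smul, hux, hmx]

end SubdirectProduct

theorem subdirect_product_orbit_general (A P : Type*) [Group A] [Group P]
    (U U₀ : Subgroup (MulAut A)) (V V₀ : Subgroup (MulAut P))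
    (hU₀ : U₀ ≤ U) (hUnormal : (U₀.subgroupOf U).Normal)
    (hV₀ : V₀ ≤ V)
    (a₀ : A)
    (XA : Set A) (hXA : XA = MulAction.orbit U a₀)
    (XP : Set P)
    (f : Set A → Set P)
    -- f is a bijection from Π_A onto Π_P
    (hf : Set.BijOn f {Y | ∃ a ∈ XA, Y = MulAction.orbit U₀ a}
                      {S | ∃ x ∈ XP, S = MulAction.orbit V₀ x})
    -- the induced map on permutations carries U^{Π_A} onto V^{Π_P}
    (hcarry₁ : ∀ u ∈ U, ∃ v ∈ V, ∀ Y ∈ {Y : Set A | ∃ a ∈ XA, Y = MulAction.orbit U₀ a},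
      f (⇑u '' Y) = ⇑v '' f Y) :
    -- the subdirect product K is a subgroup of Aut(A) × Aut(P)
    (∃ Ksub : Subgroup (MulAut A × MulAut P),
      (Ksub : Set (MulAut A × MulAut P)) =
        {w : MulAut A × MulAut P | w.1 ∈ U ∧ w.2 ∈ V ∧
          ∀ Y ∈ {Y : Set A | ∃ a ∈ XA, Y = MulAction.orbit U₀ a},
            f (⇑w.1 '' Y) = ⇑w.2 '' f Y}) ∧
    -- and ⋃_{Y ∈ Π_A} Y × Y^f is an orbit of K on A × P
    (∀ g ∈ ⋃ Y ∈ {Y : Set A | ∃ a ∈ XA, Y = MulAction.orbit U₀ a}, Y ×ˢ f Y,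
      (⋃ Y ∈ {Y : Set A | ∃ a ∈ XA, Y = MulAction.orbit U₀ a}, Y ×ˢ f Y) =
        {h : A × P | ∃ w : MulAut A × MulAut P,
          (w.1 ∈ U ∧ w.2 ∈ V ∧
            ∀ Y ∈ {Y : Set A | ∃ a ∈ XA, Y = MulAction.orbit U₀ a},
              f (⇑w.1 '' Y) = ⇑w.2 '' f Y) ∧
          h = (⇑w.1 g.1, ⇑w.2 g.2)}) := by
  subst hXA
  have hN := Subgroup.le_normalizer_of_normal_subgroupOf hU₀
  refine ⟨⟨subdirectProduct U V _ (fun _ hu _ => smul_mem_orbitsIn_orbit hN hu) f, rfl⟩,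
    fun g hg => ?_⟩
  refine (image_subdirectProduct_eq_iUnion_prod hU₀ hN hV₀ hf.mapsTo hcarry₁ hg).symm.trans ?_
  ext h
  exact exists_congr fun w => and_congr Iff.rfl eq_comm

theorem subdirect_product_orbit (A P : Type*) [Group A] [Fintype A] [Group P] [Fintype P]
    (U U₀ : Subgroup (MulAut A)) (V V₀ : Subgroup (MulAut P))
    (hU₀ : U₀ ≤ U) (hUnormal : (U₀.subgroupOf U).Normal)
    (hV₀ : V₀ ≤ V) (hVnormal : (V₀.subgroupOf V).Normal)
    (a₀ : A) (p₀ : P)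
    (XA : Set A) (hXA : XA = MulAction.orbit U a₀)
    (XP : Set P) (hXP : XP = MulAction.orbit V p₀)
    (f : Set A → Set P)
    -- f is a bijection from Π_A onto Π_P
    (hf : Set.BijOn f {Y | ∃ a ∈ XA, Y = MulAction.orbit U₀ a}
                      {S | ∃ x ∈ XP, S = MulAction.orbit V₀ x})
    -- the induced map on permutations carries U^{Π_A} onto V^{Π_P}
    (hcarry₁ : ∀ u ∈ U, ∃ v ∈ V, ∀ Y ∈ {Y : Set A | ∃ a ∈ XA, Y = MulAction.orbit U₀ a},
      f (⇑u '' Y) = ⇑v '' f Y)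
    (hcarry₂ : ∀ v ∈ V, ∃ u ∈ U, ∀ Y ∈ {Y : Set A | ∃ a ∈ XA, Y = MulAction.orbit U₀ a},
      f (⇑u '' Y) = ⇑v '' f Y) :
    -- the subdirect product K is a subgroup of Aut(A) × Aut(P)
    (∃ Ksub : Subgroup (MulAut A × MulAut P),
      (Ksub : Set (MulAut A × MulAut P)) =
        {w : MulAut A × MulAut P | w.1 ∈ U ∧ w.2 ∈ V ∧
          ∀ Y ∈ {Y : Set A | ∃ a ∈ XA, Y = MulAction.orbit U₀ a},
            f (⇑w.1 '' Y) = ⇑w.2 '' f Y}) ∧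
    -- and ⋃_{Y ∈ Π_A} Y × Y^f is an orbit of K on A × P
    (∀ g ∈ ⋃ Y ∈ {Y : Set A | ∃ a ∈ XA, Y = MulAction.orbit U₀ a}, Y ×ˢ f Y,
      (⋃ Y ∈ {Y : Set A | ∃ a ∈ XA, Y = MulAction.orbit U₀ a}, Y ×ˢ f Y) =
        {h : A × P | ∃ w : MulAut A × MulAut P,
          (w.1 ∈ U ∧ w.2 ∈ V ∧
            ∀ Y ∈ {Y : Set A | ∃ a ∈ XA, Y = MulAction.orbit U₀ a},
              f (⇑w.1 '' Y) = ⇑w.2 '' f Y) ∧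
          h = (⇑w.1 g.1, ⇑w.2 g.2)}) :=
  subdirect_product_orbit_general A P U U₀ V V₀ hU₀ hUnormal hV₀ a₀ XA hXA XP f hf hcarry₁
end
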